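/- Let C be a regular, irreducible curve that is projective over a field k, with function field F = k(C), arithmetic genus t, and a k-rational point O. Let P ≠ O be a closed point with d = deg(P) ≥ t + 1, and let f_P have divisor (P) − D_P − (d − t)(O) with D_P effective of degree t. Suppose a^+ and a^− are nonzero elements of RR_{e^+} and RR_{e^−} respectively, for some e^+, e^− ≥ 0, with a^+(P) ≠ 0 and a^−(P) ≠ 0, and suppose there exist integers δ ≥ 0 and ε^+, ε^− ≤ d − 1 satisfying e^− + ε^+ ≤ 2d + δ − 1, e^+ + ε^− ≤ 2d + δ − 1, and ε^+ + ε^− ≥ d + δ + 2t − 1. Then there exist nonzero b^+ in RR_{ε^+}, nonzero b^− in RR_{ε^−}, and g in RR_{d+t−1}(D_P) with a^− b^+ − a^+ b^− = f_P g. -/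

import Mathlib

/-! The map `(b⁺, b⁻) ↦ a⁻ b⁺ - a⁺ b⁻` sends `RR_{ε⁺} × RR_{ε⁻}` into `RR_{2d+δ-1}`, and by
Riemann-Roch its source has larger dimension than the quotient of `RR_{2d+δ-1}` by
`L((2d-1)(O) - (P))`. So some nonzero pair `(b⁺, b⁻)` gives a difference vanishing at `P`.
As `a^±` are units at `P` and `ε^± < d = deg P`, neither `b^±` can then be zero, and dividing
the difference by `f_P` leaves poles bounded by `(d+t-1)(O) - D_P`. -/

open scoped TensorProduct

noncomputable section

/-- The set of Steinberg relations in `Fˣ ⊗_ℤ Fˣ` (written additively):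
the elements `a ⊗ b` with `a + b = 1` in `F`. -/
def SteinbergSet (F : Type*) [Field F] :
    Set (TensorProduct ℤ (Additive Fˣ) (Additive Fˣ)) :=
  { x | ∃ a b : Fˣ, (a : F) + (b : F) = 1 ∧
      x = Additive.ofMul a ⊗ₜ[ℤ] Additive.ofMul b }

/-- Milnor's `K₂` of a field, via Matsumoto's presentation. -/
abbrev K2 (F : Type*) [Field F] :=
  (TensorProduct ℤ (Additive Fˣ) (Additive Fˣ)) ⧸
    Submodule.span ℤ (SteinbergSet F)

/-- The symbol `{f, g}` in `K₂(F)`. -/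
def symbol {F : Type*} [Field F] (f g : Fˣ) : K2 F :=
  Submodule.Quotient.mk (Additive.ofMul f ⊗ₜ[ℤ] Additive.ofMul g)

/-- The degree of a divisor `D` on the curve: `∑_P deg(P) · D(P)`,
where `deg P = [k(P) : k]`. -/
def divDeg (k : Type*) [Field k] {Pt : Type*} (res : Pt → Type*)
    [∀ P, Field (res P)] [∀ P, Algebra k (res P)] (D : Pt →₀ ℤ) : ℤ :=
  ∑ᶠ P, (Module.finrank k (res P) : ℤ) * D P

/-- Axioms for a regular, irreducible curve `C`, projective over a field `k`, with
`H⁰(C, O_C) = k`, presented through: its function field `F = k(C)`, its set `Pt` of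
closed points, the residue fields `res P = k(P)`, the normalized valuations `ord P`,
the evaluation maps `ev P` (evaluation at `P` of functions regular at `P`), the
Riemann-Roch spaces `L D = H⁰(C, O_C(D))`, and the arithmetic genus
`t = dim_k H¹(C, O_C)`, characterized by the Riemann-Roch relations. -/
structure IsProjCurve (k F : Type*) [Field k] [Field F] [Algebra k F]
    {Pt : Type*} (res : Pt → Type*) [∀ P, Field (res P)] [∀ P, Algebra k (res P)]
    (ord : Pt → F → ℤ) (ev : ∀ P, F → res P)
    (L : (Pt →₀ ℤ) → Submodule k F) (t : ℕ) : Prop where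
  finiteDimensional_res : ∀ P, FiniteDimensional k (res P)
  ord_mul : ∀ P (f g : F), f ≠ 0 → g ≠ 0 → ord P (f * g) = ord P f + ord P g
  ord_add : ∀ P (f g : F), f ≠ 0 → g ≠ 0 → f + g ≠ 0 →
      min (ord P f) (ord P g) ≤ ord P (f + g)
  ord_algebraMap : ∀ P (c : k), c ≠ 0 → ord P (algebraMap k F c) = 0
  ord_uniformizer : ∀ P, ∃ f : F, f ≠ 0 ∧ ord P f = 1
  ord_separates : ∀ P Q, (∀ f : F, ord P f = ord Q f) → P = Q
  support_finite : ∀ f : F, f ≠ 0 → {P | ord P f ≠ 0}.Finite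
  degree_formula : ∀ f : F, f ≠ 0 →
      ∑ᶠ P, (Module.finrank k (res P) : ℤ) * ord P f = 0
  ev_zero : ∀ P, ev P 0 = 0
  ev_one : ∀ P, ev P 1 = 1
  ev_add : ∀ P (f g : F), f ≠ 0 → g ≠ 0 → 0 ≤ ord P f → 0 ≤ ord P g →
      ev P (f + g) = ev P f + ev P g
  ev_mul : ∀ P (f g : F), f ≠ 0 → g ≠ 0 → 0 ≤ ord P f → 0 ≤ ord P g →
      ev P (f * g) = ev P f * ev P g
  ev_algebraMap : ∀ P (c : k), ev P (algebraMap k F c) = algebraMap k (res P) c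
  ev_eq_zero_iff : ∀ P (f : F), f ≠ 0 → 0 ≤ ord P f → (ev P f = 0 ↔ 0 < ord P f)
  ev_surjective : ∀ P (y : res P), ∃ f : F, f ≠ 0 ∧ 0 ≤ ord P f ∧ ev P f = y
  mem_L : ∀ (D : Pt →₀ ℤ) (f : F), f ∈ L D ↔ (f ≠ 0 → ∀ P, 0 ≤ D P + ord P f)
  finiteDimensional_L : ∀ D, FiniteDimensional k (L D)
  global_sections : ∀ f : F, f ∈ L 0 ↔ ∃ c : k, algebraMap k F c = f
  rr_ineq : ∀ D : Pt →₀ ℤ,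
      divDeg k res D + 1 - t ≤ (Module.finrank k (L D) : ℤ)
  rr_eq : ∀ D : Pt →₀ ℤ, 2 * (t : ℤ) - 2 < divDeg k res D →
      (Module.finrank k (L D) : ℤ) = divDeg k res D + 1 - t

/-- `T` is the tame symbol `K₂(F) → ∐_{P} k(P)^*`: it is determined by
`T_P({f,g}) = (-1)^{ord_P(f)·ord_P(g)} (f^{ord_P(g)} / g^{ord_P(f)})(P)`. -/
def IsTameSymbol {F : Type*} [Field F] {Pt : Type*} {res : Pt → Type*}
    [∀ P, Field (res P)]
    (ord : Pt → F → ℤ) (ev : ∀ P, F → res P)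
    (T : K2 F →+ Π₀ P : Pt, Additive ((res P)ˣ)) : Prop :=
  ∀ (f g : Fˣ) (P : Pt),
    ((Additive.toMul (T (symbol f g) P) : (res P)ˣ) : res P) =
      ev P (((-1 : Fˣ) ^ (ord P (f : F) * ord P (g : F)) *
        f ^ (ord P (g : F)) * g ^ (-ord P (f : F)) : Fˣ) : F)

section DivisorDegree

variable {k : Type*} [Field k] {Pt : Type*} {res : Pt → Type*}
    [∀ P, Field (res P)] [∀ P, Algebra k (res P)]

lemma divDeg_support_finite (D : Pt →₀ ℤ) :
    (Function.support fun Q => (Module.finrank k (res Q) : ℤ) * D Q).Finite :=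
  D.hasFiniteSupport.subset (Function.support_mul_subset_right _ _)

lemma divDeg_sub (D D' : Pt →₀ ℤ) :
    divDeg k res (D - D') = divDeg k res D - divDeg k res D' := by
  simp only [divDeg, Finsupp.sub_apply, mul_sub]
  exact finsum_sub_distrib (divDeg_support_finite D) (divDeg_support_finite D')

lemma divDeg_single (Q : Pt) (c : ℤ) :
    divDeg k res (Finsupp.single Q c) = (Module.finrank k (res Q) : ℤ) * c := by
  rw [divDeg, finsum_eq_single _ Q fun R hR => by rw [Finsupp.single_eq_of_ne' hR.symm, mul_zero],
    Finsupp.single_eq_same]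

end DivisorDegree

theorem LinearMap.exists_ne_zero_apply_mem_of_finrank_lt {K V M : Type*} [Field K]
    [AddCommGroup V] [Module K V] [FiniteDimensional K V] [AddCommGroup M] [Module K M]
    (φ : V →ₗ[K] M) {E W : Submodule K M} [FiniteDimensional K E] (hWE : W ≤ E)
    (hφ : ∀ v, φ v ∈ E) (hdim : Module.finrank K E < Module.finrank K V + Module.finrank K W) :
    ∃ v ≠ 0, φ v ∈ W := by
  let W' := W.comap E.subtype
  have hW' : Module.finrank K W' = Module.finrank K W :=
    (Submodule.comapSubtypeEquivOfLe hWE).finrank_eq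
  have hquot := W'.finrank_quotient_add_finrank
  obtain ⟨v, hv, hv0⟩ := Submodule.exists_mem_ne_zero_of_ne_bot <|
    LinearMap.ker_ne_bot_of_finrank_lt (f := W'.mkQ ∘ₗ φ.codRestrict E hφ) (by omega)
  exact ⟨v, hv0, by simpa [W'] using hv⟩

namespace IsProjCurve

variable {k F : Type*} [Field k] [Field F] [Algebra k F] {Pt : Type*} {res : Pt → Type*}
    [∀ P, Field (res P)] [∀ P, Algebra k (res P)] {ord : Pt → F → ℤ} {ev : ∀ P, F → res P}
    {L : (Pt →₀ ℤ) → Submodule k F} {t : ℕ}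

lemma ord_div (hC : IsProjCurve k F res ord ev L t) (P : Pt) {f g : F} (hf : f ≠ 0)
    (hg : g ≠ 0) : ord P (f / g) = ord P f - ord P g := by
  have := hC.ord_mul P (f / g) g (div_ne_zero hf hg) hg
  rw [div_mul_cancel₀ f hg] at this
  omega

lemma L_mono (hC : IsProjCurve k F res ord ev L t) {D D' : Pt →₀ ℤ} (h : D ≤ D') :
    L D ≤ L D' := by
  intro f hf
  rw [hC.mem_L] at hf ⊢
  exact fun hf0 Q => (hf hf0 Q).trans (by linarith [h Q])

lemma mul_mem_L (hC : IsProjCurve k F res ord ev L t) {D D' : Pt →₀ ℤ} {f g : F}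
    (hf : f ∈ L D) (hg : g ∈ L D') : f * g ∈ L (D + D') := by
  rw [hC.mem_L] at hf hg ⊢
  intro hfg Q
  have hf0 := left_ne_zero_of_mul hfg
  have hg0 := right_ne_zero_of_mul hfg
  rw [Finsupp.add_apply, hC.ord_mul Q f g hf0 hg0]
  linarith [hf hf0 Q, hg hg0 Q]

lemma div_mem_L (hC : IsProjCurve k F res ord ev L t) {D A : Pt →₀ ℤ} {f g : F}
    (hf : f ∈ L D) (hg0 : g ≠ 0) (hg : ∀ Q, ord Q g = A Q) : f / g ∈ L (D + A) := by
  rw [hC.mem_L] at hf ⊢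
  intro hfg Q
  have hf0 : f ≠ 0 := fun h => hfg (by rw [h, zero_div])
  rw [Finsupp.add_apply, hC.ord_div Q hf0 hg0, hg Q]
  linarith [hf hf0 Q]

lemma eq_zero_of_mem_L_of_divDeg_neg (hC : IsProjCurve k F res ord ev L t)
    {D : Pt →₀ ℤ} (hD : divDeg k res D < 0) {f : F} (hf : f ∈ L D) : f = 0 := by
  by_contra hf0
  have hfin : (Function.support fun Q => (Module.finrank k (res Q) : ℤ) * ord Q f).Finite :=
    (hC.support_finite f hf0).subset (Function.support_mul_subset_right _ _)
  have hdeg : 0 ≤ divDeg k res D := calc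
    0 ≤ ∑ᶠ Q, (Module.finrank k (res Q) : ℤ) * (D Q + ord Q f) :=
      finsum_nonneg fun Q => mul_nonneg (by positivity) ((hC.mem_L D f).mp hf hf0 Q)
    _ = divDeg k res D := by
      simp only [mul_add, finsum_add_distrib (divDeg_support_finite D) hfin,
        hC.degree_formula f hf0, add_zero, divDeg]
  omega

lemma ord_eq_zero_of_ev_ne_zero (hC : IsProjCurve k F res ord ev L t) {D : Pt →₀ ℤ}
    {P : Pt} {f : F} (hf : f ∈ L D) (hDP : D P = 0) (hev : ev P f ≠ 0) : ord P f = 0 := by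
  have hf0 : f ≠ 0 := fun h => hev (by rw [h, hC.ev_zero])
  have hnonneg : 0 ≤ ord P f := by simpa [hDP] using (hC.mem_L D f).mp hf hf0 P
  have := mt (hC.ev_eq_zero_iff P f hf0 hnonneg).mpr hev
  omega

lemma mem_L_sub_single_of_mul_mem (hC : IsProjCurve k F res ord ev L t) {D D' : Pt →₀ ℤ}
    {P : Pt} {a b : F} (hD : D' P ≤ D P) (ha0 : a ≠ 0) (ha : ord P a = 0) (hb : b ∈ L D)
    (hab : a * b ∈ L (D' - Finsupp.single P 1)) : b ∈ L (D - Finsupp.single P 1) := by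
  rw [hC.mem_L] at hb hab ⊢
  intro hb0 Q
  rw [Finsupp.sub_apply]
  by_cases hQ : Q = P
  · subst hQ
    have := hab (mul_ne_zero ha0 hb0) Q
    rw [Finsupp.sub_apply, hC.ord_mul Q a b ha0 hb0, ha] at this
    linarith
  · rw [Finsupp.single_eq_of_ne' (Ne.symm hQ), sub_zero]
    exact hb hb0 Q

lemma exists_mul_sub_mul_mem_L (hC : IsProjCurve k F res ord ev L t)
    {A A' B B' D D' : Pt →₀ ℤ} {a a' : F} (ha : a ∈ L A) (ha' : a' ∈ L A')
    (hB : A + B ≤ D) (hB' : A' + B' ≤ D) (hD' : D' ≤ D) (hD : 2 * (t : ℤ) - 2 < divDeg k res D)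
    (hdeg : divDeg k res D + 2 * t < divDeg k res B + divDeg k res B' + divDeg k res D' + 2) :
    ∃ b ∈ L B, ∃ b' ∈ L B', (b ≠ 0 ∨ b' ≠ 0) ∧ a * b - a' * b' ∈ L D' := by
  have := hC.finiteDimensional_L
  let φ : L B × L B' →ₗ[k] F :=
    (LinearMap.mulLeft k a ∘ₗ (L B).subtype).coprod (-(LinearMap.mulLeft k a' ∘ₗ (L B').subtype))
  have hφ : ∀ v, φ v = a * v.1 - a' * v.2 := fun v => by simp [φ, sub_eq_add_neg]
  have hφD : ∀ v, φ v ∈ L D := fun v => by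
    rw [hφ]
    exact sub_mem (hC.L_mono hB (hC.mul_mem_L ha v.1.2)) (hC.L_mono hB' (hC.mul_mem_L ha' v.2.2))
  have hdim : Module.finrank k (L D) < Module.finrank k (L B × L B') + Module.finrank k (L D') := by
    have := hC.rr_eq D hD
    have := hC.rr_ineq B
    have := hC.rr_ineq B'
    have := hC.rr_ineq D'
    rw [Module.finrank_prod]
    omega
  obtain ⟨⟨b, b'⟩, hb0, hbD'⟩ := φ.exists_ne_zero_apply_mem_of_finrank_lt (hC.L_mono hD') hφD hdim
  refine ⟨b, b.2, b', b'.2, ?_, hφ (b, b') ▸ hbD'⟩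
  rw [← not_and_or]
  simpa using hb0

/-- Otherwise `b` would lie in `L(ε(O) - (P))`, which has negative degree. -/
lemma eq_zero_of_mul_mem_L_sub_single (hC : IsProjCurve k F res ord ev L t) {O P : Pt}
    (hO : Module.finrank k (res O) = 1) (hP : P ≠ O) {a b : F} {e ε e' : ℤ}
    (ha : a ∈ L (Finsupp.single O e)) (hev : ev P a ≠ 0) (hb : b ∈ L (Finsupp.single O ε))
    (hε : ε < Module.finrank k (res P))
    (hab : a * b ∈ L (Finsupp.single O e' - Finsupp.single P 1)) : b = 0 := by
  have hOP : ∀ c : ℤ, Finsupp.single O c P = 0 := fun c => Finsupp.single_eq_of_ne' hP.symm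
  refine hC.eq_zero_of_mem_L_of_divDeg_neg ?_ <|
    hC.mem_L_sub_single_of_mul_mem (by rw [hOP, hOP]) (fun h => hev (by rw [h, hC.ev_zero]))
      (hC.ord_eq_zero_of_ev_ne_zero ha (hOP e) hev) hb hab
  rw [divDeg_sub, divDeg_single, divDeg_single, hO, Nat.cast_one, one_mul, mul_one]
  linarith

end IsProjCurve

theorem statement14_general (k F : Type*) [Field k] [Field F] [Algebra k F]
    {Pt : Type*} (res : Pt → Type*) [∀ P, Field (res P)] [∀ P, Algebra k (res P)]
    (ord : Pt → F → ℤ) (ev : ∀ P, F → res P)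
    (L : (Pt →₀ ℤ) → Submodule k F) (t : ℕ)
    (hC : IsProjCurve k F res ord ev L t)
    (O : Pt) (hO : Module.finrank k (res O) = 1)
    (P : Pt) (hP : P ≠ O) (d : ℕ) (hd : d = Module.finrank k (res P))
    (fP : F) (hfP0 : fP ≠ 0) (DP : Pt →₀ ℤ)
    (hfP : ∀ Q, ord Q fP =
      ((Finsupp.single P 1 - DP - ((d : ℤ) - t) • Finsupp.single O 1 : Pt →₀ ℤ)) Q)
    (ep em : ℤ)
    (ap am : F)
    (hap : ap ∈ L (Finsupp.single O ep)) (ham : am ∈ L (Finsupp.single O em))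
    (hapP : ev P ap ≠ 0) (hamP : ev P am ≠ 0)
    (δ εp εm : ℤ) (hδ : 0 ≤ δ) (hεp : εp ≤ (d : ℤ) - 1) (hεm : εm ≤ (d : ℤ) - 1)
    (h1 : em + εp ≤ 2 * d + δ - 1) (h2 : ep + εm ≤ 2 * d + δ - 1)
    (h3 : (d : ℤ) + δ + 2 * t - 1 ≤ εp + εm) :
    ∃ bp bm g : F, bp ≠ 0 ∧ bm ≠ 0 ∧
      bp ∈ L (Finsupp.single O εp) ∧ bm ∈ L (Finsupp.single O εm) ∧
      g ∈ L (Finsupp.single O ((d : ℤ) + t - 1) - DP) ∧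
      am * bp - ap * bm = fP * g := by
  have hdeg : 2 * (t : ℤ) + 1 + δ ≤ d := by linarith
  have hdegO : ∀ e : ℤ, divDeg k res (Finsupp.single O e) = e := fun e => by
    rw [divDeg_single, hO, Nat.cast_one, one_mul]
  have hsingle : ∀ {e ε : ℤ}, e + ε ≤ 2 * d + δ - 1 →
      Finsupp.single O e + Finsupp.single O ε ≤ Finsupp.single O (2 * (d : ℤ) + δ - 1) :=
    fun h => by rw [← Finsupp.single_add]; exact Finsupp.single_mono h
  obtain ⟨bp, hbp, bm, hbm, hb0, hbW⟩ := hC.exists_mul_sub_mul_mem_L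
    (D' := Finsupp.single O (2 * (d : ℤ) - 1) - Finsupp.single P 1) ham hap (hsingle h1)
    (hsingle h2) ((sub_le_self _ (Finsupp.single_nonneg.2 zero_le_one)).trans
      (Finsupp.single_mono (by linarith : 2 * (d : ℤ) - 1 ≤ 2 * d + δ - 1)))
    (by rw [hdegO]; linarith)
    (by simp only [divDeg_sub, hdegO]; rw [divDeg_single P, ← hd]; linarith)
  have hbp0 : bp = 0 → bm = 0 := fun h =>
    hC.eq_zero_of_mul_mem_L_sub_single hO hP hap hapP hbm (by omega)
      (by simpa only [h, mul_zero, zero_sub, sub_zero, neg_mem_iff] using hbW)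
  have hbm0 : bm = 0 → bp = 0 := fun h =>
    hC.eq_zero_of_mul_mem_L_sub_single hO hP ham hamP hbp (by omega)
      (by simpa only [h, mul_zero, zero_sub, sub_zero, neg_mem_iff] using hbW)
  refine ⟨bp, bm, (am * bp - ap * bm) / fP, by tauto, by tauto, hbp, hbm, ?_,
    (mul_div_cancel₀ _ hfP0).symm⟩
  convert hC.div_mem_L hbW hfP0 hfP using 2
  rw [Finsupp.smul_single_one, show (d : ℤ) + t - 1 = 2 * d - 1 - (d - t) by ring,
    Finsupp.single_sub]
  abel

/-- Lemma `abdlemma`.  Let `C` be a regular, irreducible curve,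
projective over `k`, with function field `F`, arithmetic genus `t` and a `k`-rational
point `O`.  Let `P ≠ O` have `d = deg(P) ≥ t + 1` and let `f_P` have divisor
`(P) - D_P - (d - t)(O)` with `D_P` effective of degree `t`.  If `a⁺ ∈ RR_{e⁺}^*`,
`a⁻ ∈ RR_{e⁻}^*` (for some `e⁺, e⁻ ≥ 0`) do not vanish at `P`, and there are integers
`δ ≥ 0` and `ε⁺, ε⁻ ≤ d - 1` with `e⁻ + ε⁺ ≤ 2d + δ - 1`, `e⁺ + ε⁻ ≤ 2d + δ - 1` and
`ε⁺ + ε⁻ ≥ d + δ + 2t - 1`, then there are `b⁺ ∈ RR_{ε⁺}^*`, `b⁻ ∈ RR_{ε⁻}^*` and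
`g ∈ RR_{d+t-1}(D_P)` with `a⁻ b⁺ - a⁺ b⁻ = f_P g`. -/
theorem statement14 (k F : Type*) [Field k] [Field F] [Algebra k F]
    {Pt : Type*} (res : Pt → Type*) [∀ P, Field (res P)] [∀ P, Algebra k (res P)]
    (ord : Pt → F → ℤ) (ev : ∀ P, F → res P)
    (L : (Pt →₀ ℤ) → Submodule k F) (t : ℕ)
    (hC : IsProjCurve k F res ord ev L t)
    (O : Pt) (hO : Module.finrank k (res O) = 1)
    (P : Pt) (hP : P ≠ O) (d : ℕ) (hd : d = Module.finrank k (res P))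
    (hdt : t + 1 ≤ d)
    (fP : F) (hfP0 : fP ≠ 0) (DP : Pt →₀ ℤ)
    (hDPeff : ∀ Q, 0 ≤ DP Q) (hDPdeg : divDeg k res DP = t)
    (hfP : ∀ Q, ord Q fP =
      ((Finsupp.single P 1 - DP - ((d : ℤ) - t) • Finsupp.single O 1 : Pt →₀ ℤ)) Q)
    (ep em : ℤ) (hep : 0 ≤ ep) (hem : 0 ≤ em)
    (ap am : F) (hap0 : ap ≠ 0) (ham0 : am ≠ 0)
    (hap : ap ∈ L (Finsupp.single O ep)) (ham : am ∈ L (Finsupp.single O em))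
    (hapP : ev P ap ≠ 0) (hamP : ev P am ≠ 0)
    (δ εp εm : ℤ) (hδ : 0 ≤ δ) (hεp : εp ≤ (d : ℤ) - 1) (hεm : εm ≤ (d : ℤ) - 1)
    (h1 : em + εp ≤ 2 * d + δ - 1) (h2 : ep + εm ≤ 2 * d + δ - 1)
    (h3 : (d : ℤ) + δ + 2 * t - 1 ≤ εp + εm) :
    ∃ bp bm g : F, bp ≠ 0 ∧ bm ≠ 0 ∧
      bp ∈ L (Finsupp.single O εp) ∧ bm ∈ L (Finsupp.single O εm) ∧
      g ∈ L (Finsupp.single O ((d : ℤ) + t - 1) - DP) ∧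
      am * bp - ap * bm = fP * g :=
  statement14_general k F res ord ev L t hC O hO P hP d hd fP hfP0 DP hfP ep em ap am hap ham hapP
    hamP δ εp εm hδ hεp hεm h1 h2 h3

end
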